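/- Define the partial sum S1(t) := Σ_{x ∈ ℤ} a1(x,t)². Then S1 satisfies the recurrence S1(t+1) = S1(t) + (1/√2)·a1(0, 2t) for all integers t ≥ 1, and consequently S1(t) = (1/2)·Σ_{k=0}^{⌊t/2⌋−1} (−1/4)^k·C(2k, k). -/
import Mathlib


open scoped BigOperators

noncomputable section

/-- Endpoint `x`-coordinate of a checker path of `n` steps encoded by step directions:
`true` = step `(1,1)`, `false` = step `(-1,1)`. -/
def endpt {n : ℕ} (d : Fin n → Bool) : ℤ :=
  ∑ i, (if d i then (1 : ℤ) else -1)

/-- The number of turns of a checker path encoded by step directions. -/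
def turns {n : ℕ} (d : Fin n → Bool) : ℕ :=
  ((Finset.range n).filter fun i =>
    ∃ h : i + 1 < n, d ⟨i, Nat.lt_of_succ_lt h⟩ ≠ d ⟨i + 1, h⟩).card

/-- Checker paths from `(0,0)` to `(x,n)` with the first step to `(1,1)`,
encoded by their step directions. -/
def pathsTo (x : ℤ) (n : ℕ) : Finset (Fin n → Bool) :=
  Finset.univ.filter fun d => (∃ h : 0 < n, d ⟨0, h⟩ = true) ∧ endpt d = x

/-- Feynman checkers with mass `m` and lattice step `ε`: the value `a(εx, εt, m, ε)`,
where `x t : ℤ` are the coordinates in units of `ε`. -/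
def am (x t : ℤ) (m ε : ℝ) : ℂ :=
  (1 + m ^ 2 * ε ^ 2 : ℂ) ^ ((1 - (t : ℂ)) / 2) * Complex.I *
    ∑ d ∈ pathsTo x t.toNat, (-Complex.I * (m * ε)) ^ turns d

/-- The basic model: `a(x,t)`. -/
def a (x t : ℤ) : ℂ :=
  (2 : ℂ) ^ ((1 - (t : ℂ)) / 2) * Complex.I *
    ∑ d ∈ pathsTo x t.toNat, (-Complex.I) ^ turns d




noncomputable section Aux

open Finset

/-- alternating binomial correlation -/
def gg (a b : ℕ) : ℝ := ∑ r ∈ range (a+1), (-1:ℝ)^r * (a.choose r) * (b.choose r)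

def hh (a b : ℕ) : ℝ := ∑ r ∈ range (a+1), (-1:ℝ)^(r+1) * (a.choose r) * (b.choose (r+1))

lemma gg_zero (b : ℕ) : gg 0 b = 1 := by simp [gg]

lemma gg_zero' (a : ℕ) : gg a 0 = 1 := by
  rw [gg, Finset.sum_eq_single 0] <;> simp
  intro r hr hr0
  obtain ⟨s, rfl⟩ := Nat.exists_eq_succ_of_ne_zero hr0
  simp

lemma gg_succ_left (a b : ℕ) : gg (a+1) b = gg a b + hh a b := by
  have h1 : gg (a+1) b
      = ∑ r ∈ range (a+1), (-1:ℝ)^(r+1) * ((a+1).choose (r+1)) * (b.choose (r+1)) + 1 := by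
    rw [gg, Finset.sum_range_succ']; simp
  have h2 : gg a b = ∑ r ∈ range a, (-1:ℝ)^(r+1) * (a.choose (r+1)) * (b.choose (r+1)) + 1 := by
    rw [gg, Finset.sum_range_succ']; simp
  have h3 : ∑ r ∈ range (a+1), (-1:ℝ)^(r+1) * (a.choose (r+1)) * (b.choose (r+1))
      = ∑ r ∈ range a, (-1:ℝ)^(r+1) * (a.choose (r+1)) * (b.choose (r+1)) := by
    rw [Finset.sum_range_succ, Nat.choose_succ_self]; simp
  have h4 : ∑ r ∈ range (a+1), (-1:ℝ)^(r+1) * ((a+1).choose (r+1)) * (b.choose (r+1))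
      = (∑ r ∈ range (a+1), (-1:ℝ)^(r+1) * (a.choose r) * (b.choose (r+1)))
        + ∑ r ∈ range (a+1), (-1:ℝ)^(r+1) * (a.choose (r+1)) * (b.choose (r+1)) := by
    rw [← Finset.sum_add_distrib]
    apply Finset.sum_congr rfl
    intro r hr
    rw [Nat.choose_succ_succ a r]
    push_cast; ring
  rw [h1, h4, h3, h2, hh]; ring

lemma hh_succ_right (a b : ℕ) : hh a (b+1) = hh a b - gg a b := by
  rw [hh, hh, gg, ← Finset.sum_sub_distrib]
  apply Finset.sum_congr rfl
  intro r hr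
  rw [Nat.choose_succ_succ b r]
  push_cast; ring

lemma gg_kg (a b : ℕ) : gg (a+1) (b+1) = gg (a+1) b + gg a (b+1) - 2 * gg a b := by
  have h1 := gg_succ_left a (b+1)
  have h2 := gg_succ_left a b
  have h3 := hh_succ_right a b
  rw [h1, h3]; rw [h2]; ring

end Aux
section Diag
open Polynomial

lemma neg_one_pow_sub {j n : ℕ} (hj : j ≤ n) : (-1:ℝ)^(n-j) = (-1:ℝ)^n * (-1:ℝ)^j := by
  have sq : (-1:ℝ)^j * (-1:ℝ)^j = 1 := by
    rw [← pow_add]; exact Even.neg_one_pow ⟨j, rfl⟩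
  have h1 : (-1:ℝ)^(n-j) * (-1:ℝ)^j = (-1:ℝ)^n := by
    rw [← pow_add, Nat.sub_add_cancel hj]
  calc (-1:ℝ)^(n-j) = (-1:ℝ)^(n-j) * ((-1:ℝ)^j * (-1:ℝ)^j) := by rw [sq, mul_one]
  _ = (-1:ℝ)^n * (-1:ℝ)^j := by rw [← mul_assoc, h1]

lemma gg_diag_poly (n : ℕ) :
    gg n n = (((X + C (1:ℝ))^n * (X + C (-1:ℝ))^n).coeff n) := by
  rw [coeff_mul, Finset.Nat.sum_antidiagonal_eq_sum_range_succ_mk, gg]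
  apply Finset.sum_congr rfl
  intro k hk
  have hk' : k ≤ n := Nat.lt_succ_iff.mp (Finset.mem_range.mp hk)
  show (-1:ℝ)^k * (n.choose k) * (n.choose k)
      = ((X + C (1:ℝ))^n).coeff k * ((X + C (-1:ℝ))^n).coeff (n - k)
  rw [coeff_X_add_C_pow, coeff_X_add_C_pow, Nat.sub_sub_self hk', Nat.choose_symm hk', one_pow]
  ring

lemma gg_diag_even (u : ℕ) : gg (2*u) (2*u) = (-1:ℝ)^u * ((2*u).choose u) := by
  rw [gg_diag_poly]
  have hfac : (X + C (1:ℝ))^(2*u) * (X + C (-1:ℝ))^(2*u) = (X^2 + C (-1:ℝ))^(2*u) := by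
    rw [← mul_pow, C_neg, C_1]; ring
  rw [hfac, add_pow, Polynomial.finset_sum_coeff, Finset.sum_eq_single u]
  · rw [← pow_mul, ← C_pow, ← C_eq_natCast, mul_assoc, ← C_mul,
      mul_comm ((-1:ℝ)^(2*u-u)), coeff_mul_C, coeff_X_pow]
    have h2 : 2*u - u = u := by omega
    rw [h2]; simp; ring
  · intro k hk hku
    rw [← pow_mul, ← C_pow, ← C_eq_natCast, mul_assoc, ← C_mul,
      mul_comm ((-1:ℝ)^(2*u-k)), coeff_mul_C, coeff_X_pow]
    rw [if_neg (by omega)]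
    simp
  · intro h; exact absurd (Finset.mem_range.mpr (by omega)) h

lemma gg_diag_odd (n : ℕ) (hn : ¬ 2 ∣ n) : gg n n = 0 := by
  have key : gg n n = (-1:ℝ)^n * gg n n := by
    nth_rewrite 1 [gg]
    rw [← Finset.sum_range_reflect, gg, Finset.mul_sum]
    apply Finset.sum_congr rfl
    intro j hj
    have hj' : j ≤ n := Nat.lt_succ_iff.mp (Finset.mem_range.mp hj)
    rw [show n + 1 - 1 - j = n - j by omega, Nat.choose_symm hj', neg_one_pow_sub hj']
    ring
  have hodd : (-1:ℝ)^n = -1 := Odd.neg_one_pow (Nat.odd_iff.mpr (by omega))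
  rw [hodd] at key; linarith
end Diag
section GG

def GG (a b : ℤ) : ℝ := if h : 0 ≤ a ∧ 0 ≤ b then gg a.toNat b.toNat else 0

lemma GG_neg_left {a b : ℤ} (h : a < 0) : GG a b = 0 := by
  rw [GG, dif_neg]; omega

lemma GG_neg_right {a b : ℤ} (h : b < 0) : GG a b = 0 := by
  rw [GG, dif_neg]; omega

lemma GG_nonneg {a b : ℤ} (ha : 0 ≤ a) (hb : 0 ≤ b) : GG a b = gg a.toNat b.toNat := by
  rw [GG, dif_pos ⟨ha, hb⟩]

lemma GG_kg {a b : ℤ} (h : 1 ≤ a + b) :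
    GG a b = GG a (b-1) + GG (a-1) b - 2 * GG (a-1) (b-1) := by
  rcases lt_or_ge a 0 with ha | ha
  · rw [GG_neg_left ha, GG_neg_left ha, GG_neg_left (by omega), GG_neg_left (by omega)]; ring
  rcases lt_or_ge b 0 with hb | hb
  · rw [GG_neg_right hb, GG_neg_right (by omega), GG_neg_right hb, GG_neg_right (by omega)]; ring
  rcases eq_or_lt_of_le ha with ha0 | ha1
  · -- a = 0, so b ≥ 1
    have hb1 : 1 ≤ b := by omega
    rw [← ha0]
    rw [GG_nonneg le_rfl hb, GG_nonneg le_rfl (by omega), GG_neg_left (by norm_num),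
      GG_neg_left (by norm_num)]
    simp [gg_zero]
  rcases eq_or_lt_of_le hb with hb0 | hb1
  · rw [← hb0]
    rw [GG_nonneg ha le_rfl, GG_neg_right (by norm_num), GG_nonneg (by omega) le_rfl,
      GG_neg_right (by norm_num)]
    have h1 : a.toNat = (a-1).toNat + 1 := by omega
    simp [gg_zero']
  · have key := gg_kg ((a-1).toNat) ((b-1).toNat)
    rw [GG_nonneg ha hb, GG_nonneg ha (by omega), GG_nonneg (by omega) hb,
      GG_nonneg (by omega) (by omega)]
    have h1 : a.toNat = (a-1).toNat + 1 := by omega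
    have h2 : b.toNat = (b-1).toNat + 1 := by omega
    rw [h1, h2, key]

end GG

section PQ

/-- (p,q) pair: index = time; time 0 is dummy. -/
def pq : ℕ → ℤ → ℝ × ℝ
  | 0, _ => (0, 0)
  | 1, x => (if x = 1 then 1 else 0, 0)
  | (n+2), x => ((pq (n+1) (x-1)).1 - (pq (n+1) (x-1)).2,
                 (pq (n+1) (x+1)).2 + (pq (n+1) (x+1)).1)

def Pf (n : ℕ) (x : ℤ) : ℝ := (pq n x).1
def Qf (n : ℕ) (x : ℤ) : ℝ := (pq n x).2

lemma Pf_one (x : ℤ) : Pf 1 x = if x = 1 then 1 else 0 := rfl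
lemma Qf_one (x : ℤ) : Qf 1 x = 0 := rfl

lemma Pf_succ (n : ℕ) (x : ℤ) : Pf (n+2) x = Pf (n+1) (x-1) - Qf (n+1) (x-1) := rfl
lemma Qf_succ (n : ℕ) (x : ℤ) : Qf (n+2) x = Qf (n+1) (x+1) + Pf (n+1) (x+1) := rfl

lemma pq_support : ∀ n : ℕ, ∀ x : ℤ, (n:ℤ) < |x| → Pf n x = 0 ∧ Qf n x = 0 := by
  intro n
  induction n with
  | zero => intro x _; exact ⟨rfl, rfl⟩
  | succ m ih =>
    intro x hx
    rcases lt_abs.mp hx with hx' | hx'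
    all_goals {
      match m, ih with
      | 0, _ =>
        constructor
        · rw [Pf_one, if_neg (by omega)]
        · rw [Qf_one]
      | (k+1), ih =>
        constructor
        · rw [Pf_succ]
          have h1 := ih (x-1) (lt_abs.mpr (by omega))
          rw [h1.1, h1.2]; ring
        · rw [Qf_succ]
          have h1 := ih (x+1) (lt_abs.mpr (by omega))
          rw [h1.1, h1.2]; ring
    }

lemma Pf_support {n : ℕ} {x : ℤ} (h : (n:ℤ) < |x|) : Pf n x = 0 := (pq_support n x h).1
lemma Qf_support {n : ℕ} {x : ℤ} (h : (n:ℤ) < |x|) : Qf n x = 0 := (pq_support n x h).2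

/-- Klein-Gordon recurrence for Q. -/
lemma Qf_kg' (k : ℕ) (x : ℤ) :
    Qf (k+3) x = Qf (k+2) (x+1) + Qf (k+2) (x-1) - 2 * Qf (k+1) x := by
  have s1 : Qf (k+3) x = Qf (k+2) (x+1) + Pf (k+2) (x+1) := Qf_succ (k+1) x
  have s2 : Pf (k+2) (x+1) = Pf (k+1) x - Qf (k+1) x := by
    have := Pf_succ k (x+1)
    rw [show x+1-1 = x by ring] at this
    exact this
  have s3 : Qf (k+2) (x-1) = Qf (k+1) x + Pf (k+1) x := by
    have := Qf_succ k (x-1)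
    rw [show x-1+1 = x by ring] at this
    exact this
  have s4 : Pf (k+1) x = Qf (k+2) (x-1) - Qf (k+1) x := by rw [s3]; ring
  rw [s1, s2, s4]; ring

lemma Qf_symm : ∀ n : ℕ, ∀ x : ℤ, Qf n (-x) = Qf n x := by
  have key : ∀ k : ℕ, (∀ x : ℤ, Qf (k+1) (-x) = Qf (k+1) x) ∧ (∀ x : ℤ, Qf (k+2) (-x) = Qf (k+2) x) := by
    intro k
    induction k with
    | zero =>
      constructor
      · intro x; rw [Qf_one, Qf_one]
      · intro x
        have e1 : ∀ y : ℤ, Qf 2 y = Qf 1 (y+1) + Pf 1 (y+1) := fun y => Qf_succ 0 y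
        rw [e1, e1]
        simp only [Qf_one, Pf_one, zero_add]
        by_cases hx : x = 0
        · subst hx; norm_num
        · rw [if_neg (by omega), if_neg (by omega)]
    | succ m ih =>
      refine ⟨ih.2, ?_⟩
      intro x
      rw [Qf_kg' m (-x), Qf_kg' m x]
      rw [show -x+1 = -(x-1) by ring, show -x-1 = -(x+1) by ring, ih.2, ih.1, ih.2]
      ring
  intro n x
  match n with
  | 0 => rfl
  | (k+1) => exact (key k).1 x

/-- parity: Qf and Pf vanish unless x ≡ n (mod 2). -/
lemma pq_parity : ∀ n : ℕ, 1 ≤ n → ∀ x : ℤ, ¬ (2 ∣ ((n:ℤ) + x)) → Pf n x = 0 ∧ Qf n x = 0 := by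
  intro n
  induction n with
  | zero => omega
  | succ m ih =>
    intro _ x hx
    match m, ih with
    | 0, _ =>
      constructor
      · rw [Pf_one, if_neg (by omega)]
      · rw [Qf_one]
    | (k+1), ih =>
      have h1 := ih (by omega) (x-1) (by push_cast at hx ⊢; omega)
      have h2 := ih (by omega) (x+1) (by push_cast at hx ⊢; omega)
      constructor
      · rw [Pf_succ, h1.1, h1.2]; ring
      · rw [Qf_succ, h2.1, h2.2]; ring

def QStmt (n : ℕ) : Prop :=
  ∀ x : ℤ, (2 ∣ ((n:ℤ) + x)) → Qf n x = GG (((n:ℤ) + x)/2 - 1) (((n:ℤ) - x)/2 - 1)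

lemma qstmt1 : QStmt 1 := by
  intro x hx
  rw [Qf_one]
  rcases le_or_gt x (-1) with h | h
  · rw [GG_neg_left (by push_cast; omega)]
  · rw [GG_neg_right (by push_cast; omega)]

lemma qstmt2 : QStmt 2 := by
  intro x hx
  have e1 : Qf 2 x = Qf 1 (x+1) + Pf 1 (x+1) := Qf_succ 0 x
  rw [e1]
  simp only [Qf_one, Pf_one, zero_add]
  by_cases hx0 : x = 0
  · subst hx0
    norm_num
    rw [GG_nonneg le_rfl le_rfl]
    show (1:ℝ) = gg 0 0
    rw [gg_zero]
  · rw [if_neg (by omega)]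
    rcases le_or_gt x (-1) with h | h
    · rw [GG_neg_left (by push_cast; omega)]
    · rw [GG_neg_right (by push_cast; omega)]

lemma Qf_formula : ∀ n : ℕ, 1 ≤ n → QStmt n := by
  have key : ∀ k : ℕ, QStmt (k+1) ∧ QStmt (k+2) := by
    intro k
    induction k with
    | zero => exact ⟨qstmt1, qstmt2⟩
    | succ m ih =>
      refine ⟨ih.2, ?_⟩
      show QStmt (m+3)
      intro x hx
      have hc3 : ((m+3:ℕ):ℤ) = (m:ℤ)+3 := by push_cast; ring
      have hc2 : ((m+2:ℕ):ℤ) = (m:ℤ)+2 := by push_cast; ring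
      have hc1 : ((m+1:ℕ):ℤ) = (m:ℤ)+1 := by push_cast; ring
      rw [hc3] at hx ⊢
      rw [Qf_kg' m x]
      have e1 := ih.2 (x+1) (by rw [hc2]; omega)
      have e2 := ih.2 (x-1) (by rw [hc2]; omega)
      have e3 := ih.1 x (by rw [hc1]; omega)
      rw [hc2] at e1 e2
      rw [hc1] at e3
      rw [e1, e2, e3]
      have r1 : ((m:ℤ)+2 + (x+1))/2 - 1 = ((m:ℤ)+3 + x)/2 - 1 := by omega
      have r2 : ((m:ℤ)+2 - (x+1))/2 - 1 = (((m:ℤ)+3 - x)/2 - 1) - 1 := by omega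
      have r3 : ((m:ℤ)+2 + (x-1))/2 - 1 = (((m:ℤ)+3 + x)/2 - 1) - 1 := by omega
      have r4 : ((m:ℤ)+2 - (x-1))/2 - 1 = ((m:ℤ)+3 - x)/2 - 1 := by omega
      have r5 : ((m:ℤ)+1 + x)/2 - 1 = (((m:ℤ)+3 + x)/2 - 1) - 1 := by omega
      have r6 : ((m:ℤ)+1 - x)/2 - 1 = (((m:ℤ)+3 - x)/2 - 1) - 1 := by omega
      rw [r1, r2, r3, r4, r5, r6]
      have hAB : 1 ≤ (((m:ℤ)+3 + x)/2 - 1) + (((m:ℤ)+3 - x)/2 - 1) := by omega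
      exact (GG_kg hAB).symm
  intro n hn
  match n, hn with
  | (k+1), _ => exact (key k).1

lemma Qf_double (n : ℕ) (hn : 1 ≤ n) : Qf (2*n) 0 = gg (n-1) (n-1) := by
  have h2 : (2:ℤ) ∣ ((2*n:ℕ):ℤ) + 0 := by push_cast; omega
  have := Qf_formula (2*n) (by omega) 0 h2
  rw [this]
  have hx : (((2*n:ℕ):ℤ) + 0)/2 - 1 = ((n:ℤ) - 1) := by push_cast; omega
  have hy : (((2*n:ℕ):ℤ) - 0)/2 - 1 = ((n:ℤ) - 1) := by push_cast; omega
  rw [hx, hy, GG_nonneg (by omega) (by omega)]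
  congr 2 <;> omega

end PQ
section PartA
open Finset Complex

def Esum (m : ℕ) (x : ℤ) (s : Bool) : ℂ :=
  ∑ d ∈ Finset.univ.filter
      (fun d : Fin (m+1) → Bool => (d 0 = true ∧ endpt d = x) ∧ d (Fin.last m) = s),
    (-Complex.I) ^ turns d

lemma pathsTo_sum (m : ℕ) (x : ℤ) :
    ∑ d ∈ pathsTo x (m+1), (-Complex.I) ^ turns d = Esum m x true + Esum m x false := by
  classical
  have hset : pathsTo x (m+1)
      = Finset.univ.filter (fun d : Fin (m+1) → Bool => d 0 = true ∧ endpt d = x) := by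
    ext d
    simp only [pathsTo, Finset.mem_filter, Finset.mem_univ, true_and]
    constructor
    · rintro ⟨⟨h, hd⟩, he⟩
      refine ⟨?_, he⟩
      have h0 : (⟨0, h⟩ : Fin (m+1)) = 0 := by apply Fin.ext; simp
      rw [← h0]; exact hd
    · rintro ⟨hd, he⟩
      refine ⟨⟨Nat.succ_pos m, ?_⟩, he⟩
      have h0 : (⟨0, Nat.succ_pos m⟩ : Fin (m+1)) = 0 := by apply Fin.ext; simp
      rw [h0]; exact hd
  rw [hset, Esum, Esum]
  rw [← Finset.sum_filter_add_sum_filter_not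
    (Finset.univ.filter (fun d : Fin (m+1) → Bool => d 0 = true ∧ endpt d = x))
    (fun d => d (Fin.last m) = true)]
  congr 1
  · rw [Finset.filter_filter]
  · rw [Finset.filter_filter]
    apply Finset.sum_congr
    · apply Finset.filter_congr
      intro d _
      simp
    · intros; rfl

lemma turns_aux {n : ℕ} (d : Fin n → Bool) (i : ℕ) (h : i+1 < n) :
    (∃ h' : i+1 < n, d ⟨i, Nat.lt_of_succ_lt h'⟩ ≠ d ⟨i+1, h'⟩)
      ↔ d ⟨i, Nat.lt_of_succ_lt h⟩ ≠ d ⟨i+1, h⟩ :=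
  ⟨fun ⟨_, hne⟩ => hne, fun hne => ⟨h, hne⟩⟩

lemma turns_one (d : Fin 1 → Bool) : turns d = 0 := by
  rw [turns, Finset.card_eq_zero, Finset.filter_eq_empty_iff]
  rintro i hi ⟨h, _⟩
  simp at hi
  omega

lemma endpt_snoc {m : ℕ} (e : Fin (m+1) → Bool) (b : Bool) :
    endpt (Fin.snoc e b : Fin (m+2) → Bool) = endpt e + (if b then 1 else -1) := by
  unfold endpt
  rw [Fin.sum_univ_castSucc]
  simp

lemma snoc_zero {m : ℕ} (e : Fin (m+1) → Bool) (b : Bool) :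
    (Fin.snoc e b : Fin (m+2) → Bool) 0 = e 0 := by
  have h : (0 : Fin (m+2)) = Fin.castSucc (0 : Fin (m+1)) := by
    simp
  rw [h, Fin.snoc_castSucc]

lemma turns_snoc {m : ℕ} (e : Fin (m+1) → Bool) (b : Bool) :
    turns (Fin.snoc e b : Fin (m+2) → Bool)
      = turns e + (if e (Fin.last m) = b then 0 else 1) := by
  classical
  set d : Fin (m+2) → Bool := Fin.snoc e b with hd
  rw [turns, turns, Finset.card_filter, Finset.card_filter]
  rw [Finset.sum_range_succ, Finset.sum_range_succ]
  rw [Finset.sum_range_succ (n := m)]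
  have htop : (if (∃ h : (m+1)+1 < m+2, d ⟨m+1, Nat.lt_of_succ_lt h⟩ ≠ d ⟨m+2, h⟩) then 1 else 0) = 0 := by
    rw [if_neg]; rintro ⟨h, _⟩; omega
  have htop' : (if (∃ h : m+1 < m+1, e ⟨m, Nat.lt_of_succ_lt h⟩ ≠ e ⟨m+1, h⟩) then 1 else 0) = 0 := by
    rw [if_neg]; rintro ⟨h, _⟩; omega
  rw [htop, htop']
  have h1 : d ⟨m, by omega⟩ = e (Fin.last m) := by
    have hc : (⟨m, by omega⟩ : Fin (m+2)) = Fin.castSucc (Fin.last m) := by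
      apply Fin.ext; simp
    rw [hc, hd, Fin.snoc_castSucc]
  have h2 : d ⟨m+1, by omega⟩ = b := by
    have hc : (⟨m+1, by omega⟩ : Fin (m+2)) = Fin.last (m+1) := by
      apply Fin.ext; simp
    rw [hc, hd, Fin.snoc_last]
  have hmid : (if (∃ h : m+1 < m+2, d ⟨m, Nat.lt_of_succ_lt h⟩ ≠ d ⟨m+1, h⟩) then 1 else 0)
      = (if e (Fin.last m) = b then 0 else 1) := by
    have hiff : (∃ h : m+1 < m+2, d ⟨m, Nat.lt_of_succ_lt h⟩ ≠ d ⟨m+1, h⟩)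
        ↔ ¬ (e (Fin.last m) = b) := by
      rw [turns_aux d m (by omega), h1, h2]
    calc (if (∃ h : m+1 < m+2, d ⟨m, Nat.lt_of_succ_lt h⟩ ≠ d ⟨m+1, h⟩) then (1:ℕ) else 0)
        = (if ¬ (e (Fin.last m) = b) then 1 else 0) := if_congr hiff rfl rfl
      _ = (if e (Fin.last m) = b then 0 else 1) := by
          by_cases h : e (Fin.last m) = b <;> simp [h]
  rw [hmid]
  have hsum : ∀ i ∈ Finset.range m,
      (if (∃ h : i+1 < m+2, d ⟨i, Nat.lt_of_succ_lt h⟩ ≠ d ⟨i+1, h⟩) then (1:ℕ) else 0)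
        = (if (∃ h : i+1 < m+1, e ⟨i, Nat.lt_of_succ_lt h⟩ ≠ e ⟨i+1, h⟩) then 1 else 0) := by
    intro i hi
    have hi' : i < m := Finset.mem_range.mp hi
    have ha : d ⟨i, by omega⟩ = e ⟨i, by omega⟩ := by
      have hc : (⟨i, by omega⟩ : Fin (m+2)) = Fin.castSucc (⟨i, by omega⟩ : Fin (m+1)) := by
        apply Fin.ext; simp
      rw [hc, hd, Fin.snoc_castSucc]
    have hb : d ⟨i+1, by omega⟩ = e ⟨i+1, by omega⟩ := by
      have hc : (⟨i+1, by omega⟩ : Fin (m+2)) = Fin.castSucc (⟨i+1, by omega⟩ : Fin (m+1)) := by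
        apply Fin.ext; simp
      rw [hc, hd, Fin.snoc_castSucc]
    refine if_congr ?_ rfl rfl
    rw [turns_aux d i (by omega), turns_aux e i (by omega), ha, hb]
  rw [Finset.sum_congr rfl hsum]
  ring

end PartA
section PartA2
open Finset Complex

lemma sum_snoc_split {m : ℕ} (f : (Fin (m+2) → Bool) → ℂ) :
    ∑ d : Fin (m+2) → Bool, f d
      = (∑ e : Fin (m+1) → Bool, f (Fin.snoc e true))
        + ∑ e : Fin (m+1) → Bool, f (Fin.snoc e false) := by
  rw [← Equiv.sum_comp (Fin.snocEquiv (fun _ : Fin (m+2) => Bool)) f, Fintype.sum_prod_type,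
    Fintype.sum_bool]
  rfl

lemma Esum_base (x : ℤ) (s : Bool) :
    Esum 0 x s = if (x = 1 ∧ s = true) then 1 else 0 := by
  classical
  have e1 : endpt (fun _ : Fin 1 => true) = 1 := by simp [endpt]
  have e2 : endpt (fun _ : Fin 1 => false) = -1 := by simp [endpt]
  rw [Esum, Finset.sum_filter, ← Equiv.sum_comp (Equiv.funUnique (Fin 1) Bool).symm,
    Fintype.sum_bool]
  show (if ((fun _ : Fin 1 => true) 0 = true ∧ endpt (fun _ : Fin 1 => true) = x)
          ∧ (fun _ : Fin 1 => true) (Fin.last 0) = s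
        then (-Complex.I) ^ turns (fun _ : Fin 1 => true) else 0)
      + (if ((fun _ : Fin 1 => false) 0 = true ∧ endpt (fun _ : Fin 1 => false) = x)
          ∧ (fun _ : Fin 1 => false) (Fin.last 0) = s
        then (-Complex.I) ^ turns (fun _ : Fin 1 => false) else 0)
      = if (x = 1 ∧ s = true) then 1 else 0
  simp only [e1, e2, turns_one, pow_zero]
  rcases s with _ | _
  · simp
  · by_cases hx : x = 1
    · subst hx; simp
    · simp [hx, Ne.symm hx]

lemma Esum_succ_true {m : ℕ} (x : ℤ) :
    Esum (m+1) x true = Esum m (x-1) true + (-Complex.I) * Esum m (x-1) false := by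
  classical
  rw [Esum, Finset.sum_filter, sum_snoc_split]
  have hzero : ∀ e ∈ (Finset.univ : Finset (Fin (m+1) → Bool)),
      (if (((Fin.snoc e false : Fin (m+2) → Bool) 0 = true
            ∧ endpt (Fin.snoc e false : Fin (m+2) → Bool) = x)
          ∧ (Fin.snoc e false : Fin (m+2) → Bool) (Fin.last (m+1)) = true)
        then (-Complex.I) ^ turns (Fin.snoc e false : Fin (m+2) → Bool) else 0) = 0 := by
    intro e _
    rw [if_neg]
    rintro ⟨-, hlast⟩
    rw [Fin.snoc_last] at hlast
    simp at hlast
  rw [Finset.sum_congr rfl hzero, Finset.sum_const_zero, add_zero,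
    Esum, Esum, Finset.sum_filter, Finset.sum_filter, Finset.mul_sum,
    ← Finset.sum_add_distrib]
  apply Finset.sum_congr rfl
  intro e _
  rw [snoc_zero, endpt_snoc, Fin.snoc_last, turns_snoc]
  have he : (endpt e + (if (true : Bool) then (1:ℤ) else -1) = x) ↔ endpt e = x - 1 := by
    simp only [if_true]; constructor <;> intro h <;> omega
  by_cases h0 : e 0 = true
  · by_cases hend : endpt e = x - 1
    · by_cases hl : e (Fin.last m) = true
      · simp [h0, hend, hl, he]
      · have hl' : e (Fin.last m) = false := by simpa using hl
        simp [h0, hend, hl', he, pow_succ]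
        ring
    · simp [h0, he, hend]
      omega
  · simp [h0]

lemma Esum_succ_false {m : ℕ} (x : ℤ) :
    Esum (m+1) x false = Esum m (x+1) false + (-Complex.I) * Esum m (x+1) true := by
  classical
  rw [Esum, Finset.sum_filter, sum_snoc_split]
  have hzero : ∀ e ∈ (Finset.univ : Finset (Fin (m+1) → Bool)),
      (if (((Fin.snoc e true : Fin (m+2) → Bool) 0 = true
            ∧ endpt (Fin.snoc e true : Fin (m+2) → Bool) = x)
          ∧ (Fin.snoc e true : Fin (m+2) → Bool) (Fin.last (m+1)) = false)
        then (-Complex.I) ^ turns (Fin.snoc e true : Fin (m+2) → Bool) else 0) = 0 := by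
    intro e _
    rw [if_neg]
    rintro ⟨-, hlast⟩
    rw [Fin.snoc_last] at hlast
    simp at hlast
  rw [Finset.sum_congr rfl hzero, Finset.sum_const_zero, zero_add,
    Esum, Esum, Finset.sum_filter, Finset.sum_filter, Finset.mul_sum,
    ← Finset.sum_add_distrib]
  apply Finset.sum_congr rfl
  intro e _
  rw [snoc_zero, endpt_snoc, Fin.snoc_last, turns_snoc]
  have he : (endpt e + (if (false : Bool) then (1:ℤ) else -1) = x) ↔ endpt e = x + 1 := by
    norm_num; constructor <;> intro h <;> omega
  by_cases h0 : e 0 = true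
  · by_cases hend : endpt e = x + 1
    · by_cases hl : e (Fin.last m) = true
      · simp [h0, hend, hl, he, pow_succ]
        ring
      · have hl' : e (Fin.last m) = false := by simpa using hl
        simp [h0, hend, hl', he]
    · simp [h0, he, hend]
      omega
  · simp [h0]

lemma Esum_eq_pq : ∀ m : ℕ, ∀ x : ℤ,
    Esum m x true = ((Pf (m+1) x : ℝ) : ℂ)
      ∧ Esum m x false = -Complex.I * ((Qf (m+1) x : ℝ) : ℂ) := by
  intro m
  induction m with
  | zero =>
    intro x
    constructor
    · rw [Esum_base, Pf_one]
      by_cases hx : x = 1 <;> simp [hx]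
    · rw [Esum_base, Qf_one]
      simp
  | succ k ih =>
    intro x
    constructor
    · rw [Esum_succ_true, (ih (x-1)).1, (ih (x-1)).2, Pf_succ, Complex.ofReal_sub]
      have : (-Complex.I) * (-Complex.I * ((Qf (k+1) (x-1) : ℝ) : ℂ))
          = -((Qf (k+1) (x-1) : ℝ) : ℂ) := by
        rw [← mul_assoc]
        simp [Complex.I_mul_I]
      rw [this]; ring
    · rw [Esum_succ_false, (ih (x+1)).1, (ih (x+1)).2, Qf_succ, Complex.ofReal_add]
      ring

end PartA2

section PartB
open Complex

lemma a_re (t : ℤ) (ht : 1 ≤ t) (x : ℤ) :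
    (a x t).re = (2:ℝ) ^ (((1:ℝ) - t)/2) * Qf t.toNat x := by
  obtain ⟨m, hm⟩ : ∃ m, t.toNat = m + 1 := ⟨t.toNat - 1, by omega⟩
  have hsum : ∑ d ∈ pathsTo x t.toNat, (-Complex.I) ^ turns d
      = ((Pf t.toNat x : ℝ) : ℂ) - Complex.I * ((Qf t.toNat x : ℝ) : ℂ) := by
    rw [hm, pathsTo_sum, (Esum_eq_pq m x).1, (Esum_eq_pq m x).2]
    ring
  have hpow : (2 : ℂ) ^ ((1 - (t : ℂ)) / 2) = (((2:ℝ) ^ (((1:ℝ) - t)/2) : ℝ) : ℂ) := by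
    rw [Complex.ofReal_cpow (by norm_num : (0:ℝ) ≤ 2)]
    norm_num
  rw [a, hsum, hpow]
  set c : ℝ := (2:ℝ) ^ (((1:ℝ) - t)/2)
  have : ((c:ℂ)) * Complex.I * (((Pf t.toNat x : ℝ) : ℂ) - Complex.I * ((Qf t.toNat x : ℝ) : ℂ))
      = ((c * Qf t.toNat x : ℝ) : ℂ) + ((c * Pf t.toNat x : ℝ) : ℂ) * Complex.I := by
    apply Complex.ext <;> simp <;> ring
  rw [this]
  simp

end PartB
section PartC

lemma summable_fin_supp (f : ℤ → ℝ) (N : ℕ) (h : ∀ x : ℤ, (N:ℤ) < |x| → f x = 0) :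
    Summable f := by
  apply summable_of_ne_finset_zero (s := Finset.Icc (-(N:ℤ)) N)
  intro x hx
  apply h
  rw [Finset.mem_Icc] at hx
  rcases not_and_or.mp hx with h' | h'
  · exact lt_abs.mpr (Or.inr (by omega))
  · exact lt_abs.mpr (Or.inl (by omega))

lemma conv : ∀ s : ℕ, 1 ≤ s → ∀ t : ℕ, 1 ≤ t → ∀ x : ℤ,
    Qf (s+t) x = ∑' y : ℤ, (Pf s y * Qf (t+1) (x - y + 1) + Qf s y * Pf (t+1) (y + 1 - x)) := by
  intro s hs
  induction s, hs using Nat.le_induction with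
  | base =>
    intro t ht x
    rw [tsum_eq_single (1:ℤ)]
    · rw [Pf_one, if_pos rfl, Qf_one, show x - 1 + 1 = x by ring, show (1:ℕ) + t = t + 1 by omega]
      ring
    · intro y hy
      rw [Pf_one, if_neg hy, Qf_one]; ring
  | succ s hs IH =>
    intro t ht x
    obtain ⟨n, rfl⟩ : ∃ n, s = n + 1 := ⟨s - 1, by omega⟩
    have key1 : ∀ z : ℤ, Qf (t+2) (z+1) = Qf (t+1) z + Pf (t+1) (-z) := by
      intro z
      rw [← Qf_symm (t+2) (z+1)]
      rw [Qf_succ t (-(z+1)), show -(z+1)+1 = -z by ring, Qf_symm]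
    have key2 : ∀ z : ℤ, Pf (t+2) (z+1) = Pf (t+1) z - Qf (t+1) (-z) := by
      intro z
      rw [Pf_succ t (z+1), show z+1-1 = z by ring, Qf_symm]
    rw [show n+1+1+t = (n+1)+(t+1) by omega, IH (t+1) (by omega) x]
    have hpt : ∀ y : ℤ,
        Pf (n+1) y * Qf (t+2) (x - y + 1) + Qf (n+1) y * Pf (t+2) (y + 1 - x)
        = (Pf (n+1) y - Qf (n+1) y) * Qf (t+1) (x-y)
          + (Pf (n+1) y + Qf (n+1) y) * Pf (t+1) (y-x) := by
      intro y
      rw [key1 (x - y), show y+1-x = (y-x)+1 by ring, key2 (y-x), neg_sub, neg_sub]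
      ring
    rw [tsum_congr hpt]
    set f1 : ℤ → ℝ := fun y => (Pf (n+1) y - Qf (n+1) y) * Qf (t+1) (x-y) with hf1
    set f2 : ℤ → ℝ := fun y => (Pf (n+1) y + Qf (n+1) y) * Pf (t+1) (y-x) with hf2
    have h1 : Summable f1 := by
      apply summable_fin_supp _ (n+1)
      intro y hy
      have hy' : ((n+1:ℕ):ℤ) < |y| := by push_cast; push_cast at hy; omega
      rw [hf1]; simp only
      rw [Pf_support hy', Qf_support hy']; ring
    have h2 : Summable f2 := by
      apply summable_fin_supp _ (n+1)
      intro y hy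
      have hy' : ((n+1:ℕ):ℤ) < |y| := by push_cast; push_cast at hy; omega
      rw [hf2]; simp only
      rw [Pf_support hy', Qf_support hy']; ring
    have split : ∑' y : ℤ, (f1 y + f2 y) = (∑' y : ℤ, f1 y) + ∑' y : ℤ, f2 y := Summable.tsum_add h1 h2
    rw [split]
    have e1 : ∑' y : ℤ, f1 y = ∑' y : ℤ, Pf (n+2) y * Qf (t+1) (x - y + 1) := by
      rw [← Equiv.tsum_eq (Equiv.addRight (1:ℤ)) (fun y => Pf (n+2) y * Qf (t+1) (x - y + 1))]
      apply tsum_congr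
      intro y
      show f1 y = Pf (n+2) (y+1) * Qf (t+1) (x - (y+1) + 1)
      rw [Pf_succ n (y+1), show y+1-1 = y by ring, show x-(y+1)+1 = x - y by ring, hf1]
    have e2 : ∑' y : ℤ, f2 y = ∑' y : ℤ, Qf (n+2) y * Pf (t+1) (y + 1 - x) := by
      rw [← Equiv.tsum_eq (Equiv.subRight (1:ℤ)) (fun y => Qf (n+2) y * Pf (t+1) (y + 1 - x))]
      apply tsum_congr
      intro y
      show f2 y = Qf (n+2) (y-1) * Pf (t+1) ((y-1) + 1 - x)
      rw [Qf_succ n (y-1), show y-1+1 = y by ring]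
      simp only [hf2]; ring
    have hA : Summable (fun y : ℤ => Pf (n+2) y * Qf (t+1) (x - y + 1)) := by
      apply summable_fin_supp _ (n+2)
      intro y hy
      have hy' : ((n+2:ℕ):ℤ) < |y| := by push_cast; push_cast at hy; omega
      rw [Pf_support hy']; ring
    have hB : Summable (fun y : ℤ => Qf (n+2) y * Pf (t+1) (y + 1 - x)) := by
      apply summable_fin_supp _ (n+2)
      intro y hy
      have hy' : ((n+2:ℕ):ℤ) < |y| := by push_cast; push_cast at hy; omega
      rw [Qf_support hy']; ring
    rw [e1, e2, ← Summable.tsum_add hA hB]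

lemma master (n : ℕ) (hn : 1 ≤ n) :
    ∑' x : ℤ, (Qf (n+1) x)^2 = 2 * (∑' x : ℤ, (Qf n x)^2) + Qf (2*n) 0 := by
  obtain ⟨m, rfl⟩ : ∃ m, n = m + 1 := ⟨n - 1, by omega⟩
  have hconv := conv (m+1) (by omega) (m+1) (by omega) 0
  rw [show (m+1) + (m+1) = 2*(m+1) by ring] at hconv
  have hpt : ∀ y : ℤ,
      Pf (m+1) y * Qf (m+1+1) (0 - y + 1) + Qf (m+1) y * Pf (m+1+1) (y + 1 - 0)
      = ((Pf (m+1) y)^2 + 2 * Pf (m+1) y * Qf (m+1) y - (Qf (m+1) y)^2) := by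
    intro y
    have ha : Qf (m+2) (0 - y + 1) = Qf (m+1) y + Pf (m+1) y := by
      rw [show (0:ℤ) - y + 1 = -(y-1) by ring, Qf_symm, Qf_succ m (y-1),
        show y-1+1 = y by ring]
    have hb : Pf (m+2) (y + 1 - 0) = Pf (m+1) y - Qf (m+1) y := by
      rw [show y+1-(0:ℤ) = y+1 by ring, Pf_succ m (y+1), show y+1-1 = y by ring]
    rw [show (m+1+1 : ℕ) = m+2 by omega] at *
    rw [ha, hb]
    ring
  rw [tsum_congr hpt] at hconv
  have hq : ∀ x : ℤ, Qf (m+1+1) x = Qf (m+1) (x+1) + Pf (m+1) (x+1) := fun x => Qf_succ m x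
  have hshift : ∑' x : ℤ, (Qf (m+1+1) x)^2 = ∑' x : ℤ, (Qf (m+1) x + Pf (m+1) x)^2 := by
    calc ∑' x : ℤ, (Qf (m+1+1) x)^2
        = ∑' x : ℤ, (Qf (m+1) (x+1) + Pf (m+1) (x+1))^2 := tsum_congr (fun x => by rw [hq x])
      _ = ∑' x : ℤ, (Qf (m+1) x + Pf (m+1) x)^2 :=
          Equiv.tsum_eq (Equiv.addRight (1:ℤ)) (fun x => (Qf (m+1) x + Pf (m+1) x)^2)
  have hsum1 : Summable (fun x : ℤ => (Pf (m+1) x)^2 + 2 * Pf (m+1) x * Qf (m+1) x - (Qf (m+1) x)^2) := by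
    apply summable_fin_supp _ (m+1)
    intro y hy
    have hy' : ((m+1:ℕ):ℤ) < |y| := by push_cast; push_cast at hy; omega
    rw [Pf_support hy', Qf_support hy']; ring
  have hsum2 : Summable (fun x : ℤ => 2 * (Qf (m+1) x)^2) := by
    apply summable_fin_supp _ (m+1)
    intro y hy
    have hy' : ((m+1:ℕ):ℤ) < |y| := by push_cast; push_cast at hy; omega
    rw [Qf_support hy']; ring
  have hpt2 : ∀ x : ℤ, (Qf (m+1) x + Pf (m+1) x)^2
      = ((Pf (m+1) x)^2 + 2 * Pf (m+1) x * Qf (m+1) x - (Qf (m+1) x)^2) + 2 * (Qf (m+1) x)^2 := by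
    intro x; ring
  rw [hshift, tsum_congr hpt2, Summable.tsum_add hsum1 hsum2, ← hconv, tsum_mul_left]
  ring

end PartC
section Final

lemma closed_form : ∀ n : ℕ, 1 ≤ n →
    2 * (∑' x : ℤ, (Qf n x)^2)
      = 2^n * ((1/2) * ∑ k ∈ Finset.range (n/2), (-(1:ℝ)/4)^k * ((2*k).choose k)) := by
  intro n hn
  induction n, hn using Nat.le_induction with
  | base =>
    have h0 : ∀ x : ℤ, (Qf 1 x)^2 = 0 := fun x => by rw [Qf_one]; ring
    rw [tsum_congr h0, tsum_zero]
    norm_num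
  | succ n hn IH =>
    rw [master n hn, Qf_double n hn]
    rcases Nat.even_or_odd n with ⟨u, hu⟩ | ⟨u, hu⟩
    · -- n = 2u even, u ≥ 1
      have hu1 : 1 ≤ u := by omega
      have hodd : ¬ 2 ∣ (n - 1) := by omega
      rw [gg_diag_odd (n-1) hodd]
      have hr : (n+1)/2 = n/2 := by omega
      rw [hr, mul_add, IH]
      ring
    · -- n = 2u+1 odd
      have hn1 : n - 1 = 2*u := by omega
      rw [hn1, gg_diag_even u]
      have hr1 : (n+1)/2 = u + 1 := by omega
      have hr2 : n/2 = u := by omega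
      have h4 : (4:ℝ)^u ≠ 0 := by positivity
      have h2 : (2:ℝ)^n = 2^(2*u) * 2 := by rw [hu]; ring
      have h24 : (2:ℝ)^(2*u) = 4^u := by rw [pow_mul]; norm_num
      have hq : ((-1:ℝ)/4)^u = (-1)^u / 4^u := div_pow _ _ u
      rw [hr1, Finset.sum_range_succ, ← hr2, mul_add, IH, hr2, hq, pow_succ, h2, h24]
      field_simp
  
lemma rpow_sq (s : ℝ) : ((2:ℝ)^s)^2 = (2:ℝ)^(2*s) := by
  rw [← Real.rpow_natCast ((2:ℝ)^s) 2, ← Real.rpow_mul (by norm_num : (0:ℝ) ≤ 2)]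
  norm_num
  rw [mul_comm]

lemma a_re_sum (t : ℤ) (ht : 1 ≤ t) :
    ∑' x : ℤ, (a x t).re ^ 2
      = (2:ℝ)^(2 * (((1:ℝ) - t)/2)) * ∑' x : ℤ, (Qf t.toNat x)^2 := by
  have h1 : ∀ x : ℤ, (a x t).re ^ 2 = (2:ℝ)^(2 * (((1:ℝ) - t)/2)) * (Qf t.toNat x)^2 := by
    intro x
    rw [a_re t ht x, mul_pow, rpow_sq]
  rw [tsum_congr h1, tsum_mul_left]


/-- Recurrence and closed form for the probability of chirality flip S1(t). -/
theorem chirality_flip_sum (t : ℤ) (ht : 1 ≤ t) :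
    (∑' x : ℤ, (a x (t + 1)).re ^ 2)
      = (∑' x : ℤ, (a x t).re ^ 2) + (1 / Real.sqrt 2) * (a 0 (2 * t)).re ∧
    (∑' x : ℤ, (a x t).re ^ 2)
      = (1 / 2) * ∑ k ∈ Finset.range ((t / 2).toNat),
          (-(1 : ℝ) / 4) ^ k * ((2 * k).choose k) := by

  set n : ℕ := t.toNat with hn
  have hnt : (n:ℤ) = t := by omega
  have hn1 : 1 ≤ n := by omega
  have htoN1 : (t+1).toNat = n + 1 := by omega
  have htoN2 : (2*t).toNat = 2 * n := by omega
  have hpos : (0:ℝ) < 2 := by norm_num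
  -- scalar facts
  have hS1 : ∑' x : ℤ, (a x t).re ^ 2
      = (2:ℝ)^(2 * (((1:ℝ) - t)/2)) * ∑' x : ℤ, (Qf n x)^2 := a_re_sum t ht
  have hS2 : ∑' x : ℤ, (a x (t+1)).re ^ 2
      = (2:ℝ)^(2 * (((1:ℝ) - (t+1:ℤ))/2)) * ∑' x : ℤ, (Qf (n+1) x)^2 := by
    rw [a_re_sum (t+1) (by omega), htoN1]
  have hA0 : (a 0 (2*t)).re = (2:ℝ)^(((1:ℝ) - (2*t:ℤ))/2) * Qf (2*n) 0 := by
    rw [a_re (2*t) (by omega) 0, htoN2]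
  -- exponent juggling
  have hcast1 : ((t+1:ℤ):ℝ) = (t:ℝ) + 1 := by push_cast; ring
  have hcast2 : ((2*t:ℤ):ℝ) = 2*(t:ℝ) := by push_cast; ring
  have hsqrt : (1:ℝ) / Real.sqrt 2 = (2:ℝ)^(-(1/2) : ℝ) := by
    rw [Real.sqrt_eq_rpow, one_div, ← Real.rpow_neg (le_of_lt hpos)]
  have hexp1 : (2:ℝ)^(2 * (((1:ℝ) - ((t:ℝ)+1))/2)) * 2 = (2:ℝ)^(2 * (((1:ℝ) - t)/2)) := by
    have h : (2:ℝ)^(2 * (((1:ℝ) - ((t:ℝ)+1))/2)) * (2:ℝ)^(1:ℝ) = (2:ℝ)^(2 * (((1:ℝ) - t)/2)) := by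
      rw [← Real.rpow_add hpos]
      congr 1
      ring
    rw [Real.rpow_one] at h
    exact h
  have hexp2 : (2:ℝ)^(-(1/2):ℝ) * (2:ℝ)^(((1:ℝ) - 2*(t:ℝ))/2) = (2:ℝ)^(2 * (((1:ℝ) - ((t:ℝ)+1))/2)) := by
    rw [← Real.rpow_add hpos]
    congr 1
    ring
  -- part 1
  have hBB : (1 / Real.sqrt 2) * (a 0 (2*t)).re
      = (2:ℝ)^(2 * (((1:ℝ) - ((t:ℝ)+1))/2)) * Qf (2*n) 0 := by
    rw [hA0, hsqrt, hcast2, ← mul_assoc, hexp2]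
  have part1 : (∑' x : ℤ, (a x (t + 1)).re ^ 2)
      = (∑' x : ℤ, (a x t).re ^ 2) + (1 / Real.sqrt 2) * (a 0 (2 * t)).re := by
    rw [hS2, master n hn1, hS1, hBB, hcast1, ← hexp1]
    ring
  refine ⟨part1, ?_⟩
  -- part 2
  have hdiv : (t / 2).toNat = n / 2 := by omega
  have hclosed := closed_form n hn1
  have hval : ∑' x : ℤ, (Qf n x)^2
      = 2^n * ((1/2) * ∑ k ∈ Finset.range (n/2), (-(1:ℝ)/4)^k * ((2*k).choose k)) / 2 := by
    rw [← hclosed]; ring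
  rw [hS1, hval, hdiv]
  have hpow2 : (2:ℝ)^(2 * (((1:ℝ) - t)/2)) = 2 / (2:ℝ)^n := by
    have h1 : 2 * (((1:ℝ) - t)/2) = 1 - (n:ℝ) := by
      rw [← hnt]; push_cast; ring
    rw [h1, Real.rpow_sub hpos, Real.rpow_one, Real.rpow_natCast]
  rw [hpow2]
  have hne : (2:ℝ)^n ≠ 0 := by positivity
  field_simp
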